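/- (Dynamic programming recurrence for OSCM) Let G=(U,V,E) be a bipartite graph with a fixed linear ordering π_U of U. Then for every S ⊆ V and every integer k with 1 ≤ k ≤ |S|−1, OPT(S) = min over subsets W ⊆ S with |W| = k of (OPT(W) + OPT(S∖W) + γ(π_U, W, S∖W)), where γ(π_U, W, S∖W) is the number of pairs of edges ((u₁,v₁),(u₂,v₂)) ∈ E(W) × E(S∖W) with π_U(u₂) < π_U(u₁). -/

import Mathlib

open Finset

/-- Two edges `e₁ = (u₁, v₁)` and `e₂ = (u₂, v₂)` of a bipartite graph
`G = (U, V, E ⊆ U × V)` cross in the 2-level drawing `(πU, πV)`: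
`u₁ ≠ u₂`, `v₁ ≠ v₂`, and either `πU u₁ < πU u₂` and `πV v₂ < πV v₁`, or
`πU u₂ < πU u₁` and `πV v₁ < πV v₂`. -/
def Cross {U V : Type*} [Fintype U] [Fintype V]
    (πU : U ≃ Fin (Fintype.card U)) (πV : V ≃ Fin (Fintype.card V))
    (e₁ e₂ : U × V) : Prop :=
  e₁.1 ≠ e₂.1 ∧ e₁.2 ≠ e₂.2 ∧
    ((πU e₁.1 < πU e₂.1 ∧ πV e₂.2 < πV e₁.2) ∨
     (πU e₂.1 < πU e₁.1 ∧ πV e₁.2 < πV e₂.2))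

/-- `E(W)`: the set of edges of `E` whose endpoint in the free layer lies in `W`. -/
noncomputable def edgesIn {U V : Type*} (E : Finset (U × V)) (W : Finset V) :
    Finset (U × V) := by
  classical exact E.filter fun e => e.2 ∈ W

/-- `cr_S(πU, πV)`: the number of distinct unordered pairs of edges of `S` that
cross in `(πU, πV)`.  Since two crossing edges have distinct `U`-endpoints, each
unordered crossing pair is counted exactly once by counting the ordered pairs
`(e₁, e₂)` that cross and satisfy `πU e₁.1 < πU e₂.1`. -/
noncomputable def cr {U V : Type*} [Fintype U] [Fintype V]
    (πU : U ≃ Fin (Fintype.card U)) (πV : V ≃ Fin (Fintype.card V))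
    (S : Finset (U × V)) : ℕ := by
  classical exact
    ((S ×ˢ S).filter fun p => Cross πU πV p.1 p.2 ∧ πU p.1.1 < πU p.2.1).card

/-- `V₁ ≺_{πV} V₂`: every vertex of `V₁` precedes every vertex of `V₂` in `πV`. -/
def Precedes {V : Type*} [Fintype V] (πV : V ≃ Fin (Fintype.card V))
    (V₁ V₂ : Finset V) : Prop :=
  ∀ v₁ ∈ V₁, ∀ v₂ ∈ V₂, πV v₁ < πV v₂

/-- `γ(πU, V₁, V₂)`: the number of pairs of edges
`((u₁, v₁), (u₂, v₂)) ∈ E(V₁) × E(V₂)` with `πU u₂ < πU u₁`; by the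
separability lemma this is the number of crossings between an edge of `E(V₁)`
and an edge of `E(V₂)` in any 2-level drawing `(πU, πV)` with `V₁ ≺_{πV} V₂`. -/
noncomputable def gammaCr {U V : Type*} [Fintype U] (E : Finset (U × V))
    (πU : U ≃ Fin (Fintype.card U)) (V₁ V₂ : Finset V) : ℕ := by
  classical exact
    ((edgesIn E V₁ ×ˢ edgesIn E V₂).filter fun p => πU p.2.1 < πU p.1.1).card

/-- `OPT(S)`: the minimum over all linear orderings `πV` of `V` of
`cr_{E(S)}(πU, πV)`. -/
noncomputable def OPT {U V : Type*} [Fintype U] [Fintype V] (E : Finset (U × V))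
    (πU : U ≃ Fin (Fintype.card U)) (S : Finset V) : ℕ :=
  sInf {c | ∃ πV : V ≃ Fin (Fintype.card V), c = cr πU πV (edgesIn E S)}

/-!
Fix an optimal ordering `πV` for `S` and let `W` consist of the first `k` vertices of `S` under
it. Since `W` precedes `S \ W`, the crossings of `E(S)` split into those inside `E(W)`, those
inside `E(S \ W)` and the `γ(πU, W, S \ W)` crossings between the two; the first two counts are
at least `OPT(W)` and `OPT(S \ W)`. Conversely, for any `W ⊆ S`, optimal orderings for `W` and
`S \ W` can be concatenated into one ordering in which `W` precedes `S \ W` and which realizes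
`OPT(W) + OPT(S \ W) + γ(πU, W, S \ W)`.
-/

theorem mem_edgesIn {U V : Type*} {E : Finset (U × V)} {W : Finset V} {e : U × V} :
    e ∈ edgesIn E W ↔ e ∈ E ∧ e.2 ∈ W := by
  classical simp [edgesIn]

theorem edgesIn_union {U V : Type*} [DecidableEq (U × V)] [DecidableEq V] (E : Finset (U × V))
    (W W' : Finset V) : edgesIn E (W ∪ W') = edgesIn E W ∪ edgesIn E W' := by
  ext e
  simp only [mem_union, mem_edgesIn]
  tauto

theorem gammaCr_eq_sum {U V : Type*} [Fintype U] (E : Finset (U × V))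
    (πU : U ≃ Fin (Fintype.card U)) (W W' : Finset V) :
    gammaCr E πU W W' =
      ∑ a ∈ edgesIn E W, ∑ b ∈ edgesIn E W', if πU b.1 < πU a.1 then 1 else 0 := by
  unfold gammaCr
  rw [card_filter, sum_product]

section Crossings

variable {U V : Type*} [Fintype U] [Fintype V]
  (πU : U ≃ Fin (Fintype.card U)) (πV : V ≃ Fin (Fintype.card V))

theorem cross_comm {e₁ e₂ : U × V} : Cross πU πV e₁ e₂ ↔ Cross πU πV e₂ e₁ := by
  simp only [Cross, ne_comm]
  tauto

theorem cross_iff_of_lt {e₁ e₂ : U × V} (h : πV e₁.2 < πV e₂.2) :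
    Cross πU πV e₁ e₂ ↔ πU e₂.1 < πU e₁.1 := by
  refine ⟨?_, fun hU => ⟨fun h₁ => hU.ne (by rw [h₁]), fun h₂ => h.ne (by rw [h₂]),
    Or.inr ⟨hU, h⟩⟩⟩
  rintro ⟨-, -, ⟨-, h'⟩ | ⟨hU, -⟩⟩
  · exact absurd h h'.asymm
  · exact hU

open scoped Classical in
theorem cr_eq_sum (T : Finset (U × V)) :
    cr πU πV T =
      ∑ a ∈ T, ∑ b ∈ T, if Cross πU πV a b ∧ πU a.1 < πU b.1 then 1 else 0 := by
  unfold cr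
  rw [card_filter, sum_product]

theorem cr_union_of_lt [DecidableEq (U × V)] {A B : Finset (U × V)}
    (hAB : ∀ a ∈ A, ∀ b ∈ B, πV a.2 < πV b.2) :
    cr πU πV (A ∪ B) = cr πU πV A + cr πU πV B +
      ∑ a ∈ A, ∑ b ∈ B, if πU b.1 < πU a.1 then 1 else 0 := by
  classical
  have hd : Disjoint A B := disjoint_left.2 fun a ha hb => (hAB a ha a hb).false
  have hAB_zero : ∑ a ∈ A, ∑ b ∈ B,
      (if Cross πU πV a b ∧ πU a.1 < πU b.1 then 1 else 0) = 0 :=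
    sum_eq_zero fun a ha => sum_eq_zero fun b hb => if_neg fun ⟨hc, hlt⟩ =>
      ((cross_iff_of_lt πU πV (hAB a ha b hb)).1 hc).asymm hlt
  have hBA : ∑ b ∈ B, ∑ a ∈ A, (if Cross πU πV b a ∧ πU b.1 < πU a.1 then 1 else 0) =
      ∑ a ∈ A, ∑ b ∈ B, if πU b.1 < πU a.1 then 1 else 0 := by
    rw [sum_comm]
    refine sum_congr rfl fun a ha => sum_congr rfl fun b hb => ?_
    simp only [cross_comm πU πV (e₁ := b), cross_iff_of_lt πU πV (hAB a ha b hb), and_self]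
  simp only [cr_eq_sum, sum_union hd, sum_add_distrib]
  rw [hAB_zero, hBA]
  omega

theorem cr_edgesIn_union_of_precedes [DecidableEq V] (E : Finset (U × V)) {W W' : Finset V}
    (h : Precedes πV W W') :
    cr πU πV (edgesIn E (W ∪ W')) =
      cr πU πV (edgesIn E W) + cr πU πV (edgesIn E W') + gammaCr E πU W W' := by
  classical
  rw [edgesIn_union, gammaCr_eq_sum]
  exact cr_union_of_lt πU πV fun a ha b hb =>
    h _ (mem_edgesIn.1 ha).2 _ (mem_edgesIn.1 hb).2

variable {πV} in
theorem cr_edgesIn_congr {πV' : V ≃ Fin (Fintype.card V)} (E : Finset (U × V)) {W : Finset V}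
    (h : ∀ v ∈ W, ∀ w ∈ W, πV v < πV w ↔ πV' v < πV' w) :
    cr πU πV (edgesIn E W) = cr πU πV' (edgesIn E W) := by
  classical
  simp only [cr_eq_sum]
  refine sum_congr rfl fun a ha => sum_congr rfl fun b hb => if_congr ?_ rfl rfl
  simp only [Cross, h _ (mem_edgesIn.1 ha).2 _ (mem_edgesIn.1 hb).2,
    h _ (mem_edgesIn.1 hb).2 _ (mem_edgesIn.1 ha).2]

end Crossings

section Orderings

variable {V : Type*} [Fintype V]

theorem exists_equivFin_lt_iff_lt {β : Type*} [LinearOrder β] {g : V → β}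
    (hg : Function.Injective g) :
    ∃ π : V ≃ Fin (Fintype.card V), ∀ v w, π v < π w ↔ g v < g w := by
  let : LinearOrder V := LinearOrder.lift' g hg
  exact ⟨(Fintype.orderIsoFinOfCardEq V rfl).symm.toEquiv,
    fun v w => (Fintype.orderIsoFinOfCardEq V rfl).symm.lt_iff_lt⟩

theorem exists_equivFin_concat (π₁ π₂ : V ≃ Fin (Fintype.card V)) (W : Finset V) :
    ∃ π : V ≃ Fin (Fintype.card V), (∀ v ∈ W, ∀ w ∉ W, π v < π w) ∧
      (∀ v ∈ W, ∀ w ∈ W, π v < π w ↔ π₁ v < π₁ w) ∧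
      (∀ v ∉ W, ∀ w ∉ W, π v < π w ↔ π₂ v < π₂ w) := by
  classical
  let g : V → ℕ := fun v => if v ∈ W then π₁ v else Fintype.card V + π₂ v
  have hg : Function.Injective g := by
    intro v w h
    have := (π₁ v).isLt
    have := (π₁ w).isLt
    simp only [g] at h
    split_ifs at h
    · exact π₁.injective (Fin.ext h)
    · omega
    · omega
    · exact π₂.injective (Fin.ext (by omega))
  obtain ⟨π, hπ⟩ := exists_equivFin_lt_iff_lt hg
  refine ⟨π, fun v hv w hw => ?_, fun v hv w hw => ?_, fun v hv w hw => ?_⟩ <;>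
    simp only [hπ, g, hv, hw, if_true, if_false, Fin.lt_def]
  · have := (π₁ v).isLt
    omega
  · omega

theorem exists_subset_card_eq_precedes [DecidableEq V] (πV : V ≃ Fin (Fintype.card V))
    {S : Finset V} {k : ℕ} (hk : k ≤ S.card) :
    ∃ W ⊆ S, W.card = k ∧ Precedes πV W (S \ W) := by
  induction k with
  | zero => exact ⟨∅, empty_subset S, card_empty, by simp [Precedes]⟩
  | succ k ih =>
    obtain ⟨W, hWS, hWcard, hW⟩ := ih (Nat.le_of_succ_le hk)
    have hne : (S \ W).Nonempty := by
      rw [← card_pos, card_sdiff_of_subset hWS]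
      omega
    obtain ⟨m, hm, hmin⟩ := exists_min_image (S \ W) πV hne
    obtain ⟨hmS, hmW⟩ := mem_sdiff.1 hm
    refine ⟨insert m W, insert_subset hmS hWS, by rw [card_insert_of_notMem hmW, hWcard], ?_⟩
    intro v hv w hw
    obtain ⟨hwS, hw⟩ := mem_sdiff.1 hw
    rw [mem_insert, not_or] at hw
    rcases mem_insert.1 hv with rfl | hvW
    · exact (hmin w (mem_sdiff.2 ⟨hwS, hw.2⟩)).lt_of_ne (πV.injective.ne (Ne.symm hw.1))
    · exact hW v hvW w (mem_sdiff.2 ⟨hwS, hw.2⟩)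

end Orderings

section Optimum

variable {U V : Type*} [Fintype U] [Fintype V] (E : Finset (U × V))
  (πU : U ≃ Fin (Fintype.card U))

theorem OPT_le_cr (S : Finset V) (πV : V ≃ Fin (Fintype.card V)) :
    OPT E πU S ≤ cr πU πV (edgesIn E S) :=
  Nat.sInf_le (s := {c | ∃ πV, c = cr πU πV (edgesIn E S)}) ⟨πV, rfl⟩

theorem exists_cr_eq_OPT (S : Finset V) :
    ∃ πV : V ≃ Fin (Fintype.card V), OPT E πU S = cr πU πV (edgesIn E S) :=
  Nat.sInf_mem (s := {c | ∃ πV, c = cr πU πV (edgesIn E S)}) ⟨_, Fintype.equivFin V, rfl⟩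

theorem OPT_le_add_gammaCr [DecidableEq V] {S W : Finset V} (hW : W ⊆ S) :
    OPT E πU S ≤ OPT E πU W + OPT E πU (S \ W) + gammaCr E πU W (S \ W) := by
  obtain ⟨π₁, h₁⟩ := exists_cr_eq_OPT E πU W
  obtain ⟨π₂, h₂⟩ := exists_cr_eq_OPT E πU (S \ W)
  obtain ⟨πV, hprec, hagree₁, hagree₂⟩ := exists_equivFin_concat π₁ π₂ W
  have hprec' : Precedes πV W (S \ W) := fun v hv w hw => hprec v hv w (mem_sdiff.1 hw).2
  calc OPT E πU S ≤ cr πU πV (edgesIn E (W ∪ S \ W)) := by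
        rw [union_sdiff_of_subset hW]
        exact OPT_le_cr E πU S πV
    _ = OPT E πU W + OPT E πU (S \ W) + gammaCr E πU W (S \ W) := by
        rw [cr_edgesIn_union_of_precedes πU πV E hprec', cr_edgesIn_congr πU E hagree₁,
          cr_edgesIn_congr πU E fun v hv w hw =>
            hagree₂ v (mem_sdiff.1 hv).2 w (mem_sdiff.1 hw).2, h₁, h₂]

theorem exists_subset_card_eq_add_gammaCr_le_OPT [DecidableEq V] {S : Finset V} {k : ℕ}
    (hk : k ≤ S.card) :
    ∃ W ⊆ S, W.card = k ∧
      OPT E πU W + OPT E πU (S \ W) + gammaCr E πU W (S \ W) ≤ OPT E πU S := by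
  obtain ⟨πV, hπV⟩ := exists_cr_eq_OPT E πU S
  obtain ⟨W, hWS, hWcard, hprec⟩ := exists_subset_card_eq_precedes πV hk
  refine ⟨W, hWS, hWcard, ?_⟩
  have hsplit := cr_edgesIn_union_of_precedes πU πV E hprec
  rw [union_sdiff_of_subset hWS] at hsplit
  rw [hπV, hsplit]
  gcongr <;> exact OPT_le_cr E πU _ πV

end Optimum

open scoped Classical in
theorem OPT_dp_recurrence_general {U V : Type*} [Fintype U] [Fintype V]
    (E : Finset (U × V)) (πU : U ≃ Fin (Fintype.card U))
    (S : Finset V) (k : ℕ) (hk₂ : k ≤ S.card - 1) :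
    OPT E πU S =
      sInf {c | ∃ W ⊆ S, W.card = k ∧
        c = OPT E πU W + OPT E πU (S \ W) + gammaCr E πU W (S \ W)} := by
  obtain ⟨W, hWS, hWcard, hle⟩ :=
    exists_subset_card_eq_add_gammaCr_le_OPT E πU (hk₂.trans (Nat.sub_le _ _))
  apply le_antisymm
  · refine le_csInf ⟨_, W, hWS, hWcard, rfl⟩ ?_
    rintro _ ⟨W', hW'S, -, rfl⟩
    exact OPT_le_add_gammaCr E πU hW'S
  · refine (Nat.sInf_le ?_).trans hle
    exact ⟨W, hWS, hWcard, rfl⟩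

open scoped Classical in
/-- dynamic programming recurrence for OSCM: for every `S ⊆ V`
and every `k` with `1 ≤ k ≤ |S| − 1`,
`OPT(S) = min_{W ⊆ S, |W| = k} (OPT(W) + OPT(S \ W) + γ(πU, W, S \ W))`. -/
theorem OPT_dp_recurrence {U V : Type*} [Fintype U] [Fintype V]
    (E : Finset (U × V)) (πU : U ≃ Fin (Fintype.card U))
    (S : Finset V) (k : ℕ) (hk₁ : 1 ≤ k) (hk₂ : k ≤ S.card - 1) :
    OPT E πU S =
      sInf {c | ∃ W ⊆ S, W.card = k ∧
        c = OPT E πU W + OPT E πU (S \ W) + gammaCr E πU W (S \ W)} :=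
  OPT_dp_recurrence_general E πU S k hk₂
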